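/- Let n ≥ 1 and let M and M' be loopless matroids on ground sets Fin m and Fin m' respectively, all of whose bases have exactly n − 1 elements, and suppose M and M' admit realisations p : Fin m → (Fin (n−1) → k) and p' : Fin m' → (Fin (n−1) → k) over k. Then X_M = X_{M'} if and only if M and M' are isomorphic, i.e., there exists a bijection e : Fin m ≃ Fin m' such that for every B ⊆ Fin m, B is a base of M exactly when the image e '' B is a base of M'. -/

import Mathlib

noncomputable section

/-- `g : ℕ → ℕ → k` is a finitary invertible `ℕ×ℕ` matrix. -/
def IsFinGL {k : Type*} [Field k] (g : ℕ → ℕ → k) : Prop :=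
  ∃ N : ℕ, (∀ i j : ℕ, N ≤ i ∨ N ≤ j → g i j = if i = j then 1 else 0) ∧
    IsUnit (Matrix.of fun i j : Fin N => g i.1 j.1)

/-- A permutation of `ℕ` with finite support. -/
def IsFinPerm (σ : Equiv.Perm ℕ) : Prop := ∃ N : ℕ, ∀ i : ℕ, N ≤ i → σ i = i

/-- The action of `Sym` on `ℕ×ℕ` matrices by permuting rows. -/
def rowPerm {k : Type*} [Field k] (σ : Equiv.Perm ℕ) (A : ℕ → ℕ → k) : ℕ → ℕ → k :=
  fun i j => A (σ⁻¹ i) j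

/-- The action of `GL` on `ℕ×ℕ` matrices by right multiplication on columns:
`(A • g) i j = Σ_t A i t * g t j`, a finite sum since `g` is finitary. -/
def colMul {k : Type*} [Field k] (A : ℕ → ℕ → k) (g : ℕ → ℕ → k) : ℕ → ℕ → k :=
  fun i j => ∑ᶠ t : ℕ, A i t * g t j

/-- A subset of the space of `ℕ×ℕ` matrices is Zariski closed if it is the
common zero locus of a set of polynomials in the entries. -/
def IsZClosedMat {k : Type*} [Field k] (X : Set (ℕ → ℕ → k)) : Prop :=
  ∃ S : Set (MvPolynomial (ℕ × ℕ) k),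
    X = {A | ∀ f ∈ S, MvPolynomial.eval (fun p : ℕ × ℕ => A p.1 p.2) f = 0}

/-- The Zariski closure of a set of `ℕ×ℕ` matrices. -/
def zClosureMat {k : Type*} [Field k] (S : Set (ℕ → ℕ → k)) : Set (ℕ → ℕ → k) :=
  ⋂₀ {C | IsZClosedMat C ∧ S ⊆ C}

/-- `p : Fin a → (Fin (n-1) → k)` realises the matroid `N` on `Fin a` (all of
whose bases have `n - 1` elements) if an `(n-1)`-element subset `I` is a base
of `N` exactly when the corresponding family of rows is linearly independent. -/
def Realises {k : Type*} [Field k] (n a : ℕ) (N : Matroid (Fin a))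
    (p : Fin a → Fin (n - 1) → k) : Prop :=
  ∀ I : Finset (Fin a), I.card = n - 1 →
    (N.IsBase ↑I ↔ LinearIndependent k (fun e : I => p e))

/-- `R_N`: the set of `a × (n-1)` matrices `q` such that for every
`(n-1)`-element subset `I` that is not a base of `N`, the `(n-1)×(n-1)` matrix
with rows `(q e)_{e ∈ I}` is singular (i.e. its rows are linearly dependent). -/
def RSet (k : Type*) [Field k] (n a : ℕ) (N : Matroid (Fin a)) :
    Set (Fin a → Fin (n - 1) → k) :=
  {q | ∀ I : Finset (Fin a), I.card = n - 1 → ¬ N.IsBase ↑I →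
    ¬ LinearIndependent k (fun e : I => q e)}

/-- Extension of a finite matrix by zeros to an `ℕ×ℕ` matrix. -/
def extZero {k : Type*} [Field k] {a b : ℕ} (q : Fin a → Fin b → k) : ℕ → ℕ → k :=
  fun i j => if h : i < a ∧ j < b then q ⟨i, h.1⟩ ⟨j, h.2⟩ else 0

/-- `X_N`: the Zariski closure of the `Sym × GL`-orbit of `R_N` (with its
elements extended by zeros to `ℕ×ℕ` matrices). -/
def XSet (k : Type*) [Field k] (n a : ℕ) (N : Matroid (Fin a)) : Set (ℕ → ℕ → k) :=
  zClosureMat {A | ∃ q ∈ RSet k n a N, ∃ (σ : Equiv.Perm ℕ) (g : ℕ → ℕ → k),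
    IsFinPerm σ ∧ IsFinGL g ∧ A = colMul (rowPerm σ (extZero q)) g}

/-!
Fix a window of `L` rows. The matrices whose first `n - 1` columns, in that window, vanish
outside the image of some map `t : Fin a → Fin L` and form an element of `R_N` along `t` make up
a finite union of zero loci of coordinates and of maximal minors, so a Zariski-closed set. For
`a ≤ L` it contains the orbit of `R_N`, because right multiplication by a square matrix and
replacing rows by zero preserve `R_N`; hence it contains `X_N`.

If `X_M = X_{M'}`, the zero-padded realisation of `M` lies in `X_{M'}`. As `M` is loopless, its
rows are nonzero, so they are all in the image of `t`; this gives an injection `Fin m → Fin m'`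
carrying bases of `M` (independent rows) to bases of `M'`. Base-preserving injections in both
directions between finite sets force a bijection of the families of bases. Conversely, an
isomorphism permutes rows, and this carries the orbit of `R_M` into that of `R_{M'}`.
-/

open Function

section

variable {k : Type*} [Field k]

lemma subset_zClosureMat (S : Set (ℕ → ℕ → k)) : S ⊆ zClosureMat S :=
  fun _ hA _ hC => hC.2 hA

lemma zClosureMat_subset {S C : Set (ℕ → ℕ → k)} (hC : IsZClosedMat C) (hSC : S ⊆ C) :
    zClosureMat S ⊆ C :=
  fun _ hA => hA C ⟨hC, hSC⟩

lemma zClosureMat_mono {S T : Set (ℕ → ℕ → k)} (h : S ⊆ T) : zClosureMat S ⊆ zClosureMat T :=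
  fun _ hA C hC => hA C ⟨hC.1, h.trans hC.2⟩

lemma isZClosedMat_setOf_eval_eq_zero (f : MvPolynomial (ℕ × ℕ) k) :
    IsZClosedMat {A : ℕ → ℕ → k | MvPolynomial.eval (fun p => A p.1 p.2) f = 0} :=
  ⟨{f}, by simp⟩

lemma isZClosedMat_setOf_apply_eq_zero (i j : ℕ) : IsZClosedMat {A : ℕ → ℕ → k | A i j = 0} := by
  simpa using isZClosedMat_setOf_eval_eq_zero (k := k) (MvPolynomial.X (i, j))

lemma IsZClosedMat.inter {X Y : Set (ℕ → ℕ → k)} (hX : IsZClosedMat X) (hY : IsZClosedMat Y) :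
    IsZClosedMat (X ∩ Y) := by
  obtain ⟨S, rfl⟩ := hX
  obtain ⟨T, rfl⟩ := hY
  exact ⟨S ∪ T, by ext; simp [or_imp, forall_and]⟩

lemma IsZClosedMat.iInter {ι : Sort*} {X : ι → Set (ℕ → ℕ → k)} (h : ∀ i, IsZClosedMat (X i)) :
    IsZClosedMat (⋂ i, X i) := by
  choose S hS using h
  exact ⟨⋃ i, S i, by ext; simp [hS, forall_comm (α := ι)]⟩

/-- The union is cut out by the products of one polynomial from each family. -/
lemma IsZClosedMat.iUnion {ι : Type*} [Finite ι] {X : ι → Set (ℕ → ℕ → k)}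
    (h : ∀ i, IsZClosedMat (X i)) : IsZClosedMat (⋃ i, X i) := by
  have := Fintype.ofFinite ι
  choose S hS using h
  refine ⟨{f | ∃ F : ι → MvPolynomial (ℕ × ℕ) k, (∀ i, F i ∈ S i) ∧ f = ∏ i, F i}, ?_⟩
  ext A
  simp only [hS, Set.mem_iUnion, Set.mem_ofPred_eq]
  constructor
  · rintro ⟨i, hi⟩ _ ⟨F, hF, rfl⟩
    rw [map_prod]
    exact Finset.prod_eq_zero (Finset.mem_univ i) (hi _ (hF i))
  · intro hA
    by_contra! hno
    choose F hF hne using hno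
    have := hA _ ⟨F, hF, rfl⟩
    rw [map_prod] at this
    exact Finset.prod_ne_zero_iff.mpr (fun i _ => hne i) this

lemma isZClosedMat_setOf_not_linearIndependent {ι : Type*} [Fintype ι] {r : ℕ}
    (hι : Fintype.card ι = r) (row : ι → ℕ) :
    IsZClosedMat {A : ℕ → ℕ → k | ¬ LinearIndependent k (fun i (c : Fin r) => A (row i) c)} := by
  let e : Fin r ≃ ι := (Fintype.equivFinOfCardEq hι).symm
  convert isZClosedMat_setOf_eval_eq_zero
    (Matrix.of fun s c : Fin r => MvPolynomial.X (R := k) (row (e s), (c : ℕ))).det using 3 with A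
  have hminor : (MvPolynomial.eval fun p => A p.1 p.2).mapMatrix
      (Matrix.of fun s c : Fin r => MvPolynomial.X (R := k) (row (e s), (c : ℕ))) =
      Matrix.of fun s c : Fin r => A (row (e s)) c := by
    ext
    simp
  rw [RingHom.map_det, hminor, ← linearIndependent_equiv e, ← not_iff_not, not_not,
    ← ne_eq, ← isUnit_iff_ne_zero, ← Matrix.isUnit_iff_isUnit_det,
    ← Matrix.linearIndependent_rows_iff_isUnit]
  rfl

lemma mem_RSet_iff {n a : ℕ} {N : Matroid (Fin a)} {q : Fin a → Fin (n - 1) → k} :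
    q ∈ RSet k n a N ↔
      ∀ B : Set (Fin a), B.ncard = n - 1 → ¬ N.IsBase B → ¬ LinearIndepOn k q B := by
  refine ⟨fun hq B hB => ?_, fun hq I hI => hq I (by rwa [Set.ncard_coe_finset])⟩
  obtain ⟨I, rfl⟩ := B.toFinite.exists_finset_coe
  exact hq I (by rwa [Set.ncard_coe_finset] at hB)

lemma mem_RSet_of_forall_eq_vecMul_or_eq_zero {n a : ℕ} {N : Matroid (Fin a)}
    {q : Fin a → Fin (n - 1) → k} (hq : q ∈ RSet k n a N)
    (C : Matrix (Fin (n - 1)) (Fin (n - 1)) k) (q' : Fin a → Fin (n - 1) → k)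
    (hq' : ∀ j, q' j = Matrix.vecMul (q j) C ∨ q' j = 0) :
    q' ∈ RSet k n a N := by
  intro I hI hB hli
  by_cases hmul : ∀ e ∈ I, q' e = Matrix.vecMul (q e) C
  · have : (fun e : I => q' e) = C.vecMulLinear ∘ fun e : I => q e := by
      funext e
      simpa using hmul e e.2
    rw [this] at hli
    exact hq I hI hB (hli.of_comp _)
  · push Not at hmul
    obtain ⟨e, he, hne⟩ := hmul
    exact hli.ne_zero ⟨e, he⟩ ((hq' e).resolve_left hne)

namespace Realises

variable {n a : ℕ} {N : Matroid (Fin a)} {p : Fin a → Fin (n - 1) → k}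

lemma isBase_iff (hp : Realises n a N p) {B : Set (Fin a)} (hB : B.ncard = n - 1) :
    N.IsBase B ↔ LinearIndepOn k p B := by
  obtain ⟨I, rfl⟩ := B.toFinite.exists_finset_coe
  exact hp I (by rwa [Set.ncard_coe_finset] at hB)

lemma mem_RSet (hp : Realises n a N p) : p ∈ RSet k n a N :=
  fun I hI hnB hli => hnB ((hp I hI).2 hli)

lemma ne_zero (hp : Realises n a N p) (hrk : ∀ B : Set (Fin a), N.IsBase B → B.ncard = n - 1)
    (hloop : ∀ e : Fin a, N.Indep {e}) (e : Fin a) : p e ≠ 0 := by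
  obtain ⟨B, hB, heB⟩ := (hloop e).exists_isBase_superset
  exact ((hp.isBase_iff (hrk B hB)).1 hB).ne_zero (heB rfl)

end Realises

def orbitRSet (k : Type*) [Field k] (n a : ℕ) (N : Matroid (Fin a)) : Set (ℕ → ℕ → k) :=
  {A | ∃ q ∈ RSet k n a N, ∃ (σ : Equiv.Perm ℕ) (g : ℕ → ℕ → k),
    IsFinPerm σ ∧ IsFinGL g ∧ A = colMul (rowPerm σ (extZero q)) g}

lemma XSet_eq_zClosureMat_orbitRSet (n a : ℕ) (N : Matroid (Fin a)) :
    XSet k n a N = zClosureMat (orbitRSet k n a N) :=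
  rfl

lemma colMul_rowPerm_extZero_apply {a b : ℕ} (σ : Equiv.Perm ℕ) (q : Fin a → Fin b → k)
    (g : ℕ → ℕ → k) (i j : ℕ) :
    colMul (rowPerm σ (extZero q)) g i j =
      if h : σ⁻¹ i < a then ∑ s : Fin b, q ⟨σ⁻¹ i, h⟩ s * g s j else 0 := by
  simp only [colMul, rowPerm, Equiv.Perm.inv_def]
  split_ifs with h
  · have hsupp : support (fun s => extZero q (σ.symm i) s * g s j) ⊆ ↑(Finset.range b) := by
      intro s hs
      by_contra hsb
      exact hs (by simp [extZero, show ¬ s < b by simpa using hsb])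
    rw [finsum_eq_sum_of_support_subset _ hsupp, Finset.sum_range]
    simp [extZero, h]
  · simp [extZero, h]

lemma rowPerm_one (A : ℕ → ℕ → k) : rowPerm 1 A = A :=
  rfl

lemma rowPerm_mul (σ τ : Equiv.Perm ℕ) (A : ℕ → ℕ → k) :
    rowPerm (σ * τ) A = rowPerm σ (rowPerm τ A) :=
  rfl

lemma colMul_one (A : ℕ → ℕ → k) : colMul A (fun i j => if i = j then 1 else 0) = A := by
  ext i j
  rw [colMul, finsum_eq_single _ j (fun t ht => by simp [ht])]
  simp

lemma isFinPerm_one : IsFinPerm 1 :=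
  ⟨0, fun _ _ => rfl⟩

lemma isFinGL_one : IsFinGL (fun i j : ℕ => if i = j then (1 : k) else 0) :=
  ⟨0, fun _ _ _ => rfl, isUnit_of_subsingleton _⟩

lemma extZero_mem_XSet {n a : ℕ} {N : Matroid (Fin a)} {q : Fin a → Fin (n - 1) → k}
    (hq : q ∈ RSet k n a N) : extZero q ∈ XSet k n a N := by
  rw [XSet_eq_zClosureMat_orbitRSet]
  exact subset_zClosureMat _
    ⟨q, hq, 1, _, isFinPerm_one, isFinGL_one, by rw [rowPerm_one, colMul_one]⟩

def windowSet (k : Type*) [Field k] (n a L : ℕ) (N : Matroid (Fin a)) : Set (ℕ → ℕ → k) :=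
  {A | ∃ t : Fin a → Fin L, (∀ i : Fin L, i ∉ Set.range t → ∀ c : Fin (n - 1), A i c = 0) ∧
    (fun j (c : Fin (n - 1)) => A (t j) c) ∈ RSet k n a N}

lemma isZClosedMat_windowSet (n a L : ℕ) (N : Matroid (Fin a)) :
    IsZClosedMat (windowSet k n a L N) := by
  have hunion : windowSet k n a L N = ⋃ t : Fin a → Fin L,
      (⋂ (i : Fin L) (_ : i ∉ Set.range t) (c : Fin (n - 1)), {A | A i c = 0}) ∩
      ⋂ (I : Finset (Fin a)) (_ : I.card = n - 1) (_ : ¬ N.IsBase ↑I),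
        {A | ¬ LinearIndependent k (fun (e : I) (c : Fin (n - 1)) => A (t e) c)} := by
    ext A
    simp [windowSet, RSet]
  rw [hunion]
  refine IsZClosedMat.iUnion fun t => .inter ?_ ?_
  · exact .iInter fun _ => .iInter fun _ => .iInter fun _ => isZClosedMat_setOf_apply_eq_zero _ _
  · exact .iInter fun _ => .iInter fun hI => .iInter fun _ =>
      isZClosedMat_setOf_not_linearIndependent (by simpa using hI) _

lemma exists_fin_eq_or_notMem_range {a L : ℕ} (haL : a ≤ L) (f : Fin a → ℕ) :
    ∃ t : Fin a → Fin L, ∀ j, (t j : ℕ) = f j ∨ (L ≤ f j ∧ (t j : ℕ) ∉ Set.range f) := by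
  by_cases hf : ∀ j, f j < L
  · exact ⟨fun j => ⟨f j, hf j⟩, fun j => .inl rfl⟩
  push Not at hf
  obtain ⟨j₀, hj₀⟩ := hf
  -- the `a` values of `f` cannot cover `{0, …, L - 1}` and `f j₀ ≥ L` at once
  obtain ⟨i₀, hi₀L, hi₀f⟩ : ∃ i < L, i ∉ Set.range f := by
    by_contra! hcover
    have hsub : insert (f j₀) (Finset.range L) ⊆ Finset.univ.image f := by
      simpa [Finset.insert_subset_iff, Finset.subset_iff] using hcover
    have := (Finset.card_le_card hsub).trans Finset.card_image_le
    rw [Finset.card_insert_of_notMem (by simpa using hj₀), Finset.card_range,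
      Finset.card_univ, Fintype.card_fin] at this
    omega
  refine ⟨fun j => if h : f j < L then ⟨f j, h⟩ else ⟨i₀, hi₀L⟩, fun j => ?_⟩
  dsimp only
  split_ifs with h
  · exact .inl rfl
  · exact .inr ⟨not_lt.1 h, hi₀f⟩

lemma orbitRSet_subset_windowSet {n a L : ℕ} (haL : a ≤ L) (N : Matroid (Fin a)) :
    orbitRSet k n a N ⊆ windowSet k n a L N := by
  rintro _ ⟨q, hq, σ, g, -, -, rfl⟩
  have hzero : ∀ i, (∀ j : Fin a, σ j ≠ i) → ∀ c, colMul (rowPerm σ (extZero q)) g i c = 0 := by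
    intro i hi c
    rw [colMul_rowPerm_extZero_apply, dif_neg]
    exact fun h => hi ⟨_, h⟩ (σ.apply_symm_apply i)
  obtain ⟨t, ht⟩ := exists_fin_eq_or_notMem_range haL fun j : Fin a => σ j
  refine ⟨t, fun i hi c => hzero i (fun j hj => hi ⟨j, ?_⟩) c, ?_⟩
  · rcases ht j with h | ⟨hL, -⟩
    · exact Fin.ext (h.trans hj)
    · exact absurd (hj ▸ i.2) (not_lt.2 hL)
  refine mem_RSet_of_forall_eq_vecMul_or_eq_zero hq (Matrix.of fun s c : Fin (n - 1) => g s c) _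
    fun j => ?_
  rcases ht j with h | ⟨-, h⟩
  · left
    ext c
    rw [h, colMul_rowPerm_extZero_apply, dif_pos (by simp)]
    simp [Matrix.vecMul, dotProduct]
  · right
    ext c
    exact hzero _ (fun j' hj' => h ⟨j', hj'⟩) c

lemma XSet_subset_windowSet {n a L : ℕ} (haL : a ≤ L) (N : Matroid (Fin a)) :
    XSet k n a N ⊆ windowSet k n a L N := by
  rw [XSet_eq_zClosureMat_orbitRSet]
  exact zClosureMat_subset (isZClosedMat_windowSet n a L N) (orbitRSet_subset_windowSet haL N)

lemma exists_injective_isBase_image_of_extZero_mem_windowSet {n m a L : ℕ} (hmL : m ≤ L)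
    {M : Matroid (Fin m)} {N : Matroid (Fin a)} {p : Fin m → Fin (n - 1) → k}
    (hrk : ∀ B : Set (Fin m), M.IsBase B → B.ncard = n - 1) (hp : Realises n m M p)
    (hne : ∀ e, p e ≠ 0) (hmem : extZero p ∈ windowSet k n a L N) :
    ∃ ι : Fin m → Fin a, Injective ι ∧ ∀ B, M.IsBase B → N.IsBase (ι '' B) := by
  obtain ⟨t, hzero, hR⟩ := hmem
  have hrange (e : Fin m) : Fin.castLE hmL e ∈ Set.range t := by
    by_contra he
    refine hne e (funext fun c => ?_)
    simpa [extZero] using hzero _ he c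
  choose ι hι using hrange
  have hinj : Injective ι := fun x y h => Fin.castLE_injective hmL (by rw [← hι, ← hι, h])
  refine ⟨ι, hinj, fun B hB => ?_⟩
  by_contra hnB
  refine mem_RSet_iff.1 hR _ (by rw [Set.ncard_image_of_injective _ hinj, hrk B hB]) hnB
    (LinearIndepOn.image_of_comp ι _ ?_)
  convert (hp.isBase_iff (hrk B hB)).1 hB using 1
  ext e c
  simp [hι, extZero]

lemma IsFinPerm.mul {σ τ : Equiv.Perm ℕ} (hσ : IsFinPerm σ) (hτ : IsFinPerm τ) :
    IsFinPerm (σ * τ) := by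
  obtain ⟨N₁, h₁⟩ := hσ
  obtain ⟨N₂, h₂⟩ := hτ
  exact ⟨max N₁ N₂, fun i hi => by
    rw [Equiv.Perm.mul_apply, h₂ i (le_of_max_le_right hi), h₁ i (le_of_max_le_left hi)]⟩

lemma IsFinPerm.inv {σ : Equiv.Perm ℕ} (hσ : IsFinPerm σ) : IsFinPerm σ⁻¹ := by
  obtain ⟨N, h⟩ := hσ
  exact ⟨N, fun i hi => by rw [Equiv.Perm.inv_eq_iff_eq, h i hi]⟩

lemma isFinPerm_extendDomain {a : ℕ} (f : Equiv.Perm (Fin a)) :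
    IsFinPerm (f.extendDomain Fin.equivSubtype) :=
  ⟨a, fun _ hi => Equiv.Perm.extendDomain_apply_not_subtype _ _ (not_lt.2 hi)⟩

lemma rowPerm_extendDomain_extZero {a b : ℕ} (f : Equiv.Perm (Fin a)) (q : Fin a → Fin b → k) :
    rowPerm (f.extendDomain Fin.equivSubtype) (extZero q) = extZero (q ∘ f.symm) := by
  ext i j
  simp only [rowPerm, Equiv.Perm.extendDomain_inv]
  by_cases hi : i < a
  · rw [Equiv.Perm.extendDomain_apply_subtype f⁻¹ (Fin.equivSubtype : Fin a ≃ {i // i < a}) hi]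
    by_cases hj : j < b <;> simp [extZero, hi, hj, Fin.equivSubtype]
  · rw [Equiv.Perm.extendDomain_apply_not_subtype f⁻¹ (Fin.equivSubtype : Fin a ≃ {i // i < a}) hi]
    simp [extZero, hi]

lemma comp_symm_mem_RSet {n a : ℕ} {N N' : Matroid (Fin a)} (e : Equiv.Perm (Fin a))
    (he : ∀ B, N.IsBase B → N'.IsBase (e '' B)) {q : Fin a → Fin (n - 1) → k}
    (hq : q ∈ RSet k n a N) : q ∘ e.symm ∈ RSet k n a N' := by
  rw [mem_RSet_iff] at hq ⊢
  intro B hB hnB hli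
  refine hq (e.symm '' B) (by rw [Set.ncard_image_of_injective _ e.symm.injective, hB])
    (fun hB' => hnB ?_) (hli.image_of_comp _ _)
  simpa using he _ hB'

lemma orbitRSet_subset_of_isBase_image {n a : ℕ} {N N' : Matroid (Fin a)} (e : Equiv.Perm (Fin a))
    (he : ∀ B, N.IsBase B → N'.IsBase (e '' B)) : orbitRSet k n a N ⊆ orbitRSet k n a N' := by
  rintro _ ⟨q, hq, σ, g, hσ, hg, rfl⟩
  refine ⟨q ∘ e.symm, comp_symm_mem_RSet e he hq, σ * (e.extendDomain Fin.equivSubtype)⁻¹, g,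
    hσ.mul (isFinPerm_extendDomain e).inv, hg, ?_⟩
  rw [← rowPerm_extendDomain_extZero, ← rowPerm_mul, inv_mul_cancel_right]

lemma XSet_subset_XSet_of_isBase_image {n a : ℕ} {N N' : Matroid (Fin a)}
    (e : Equiv.Perm (Fin a)) (he : ∀ B, N.IsBase B → N'.IsBase (e '' B)) :
    XSet k n a N ⊆ XSet k n a N' := by
  rw [XSet_eq_zClosureMat_orbitRSet, XSet_eq_zClosureMat_orbitRSet]
  exact zClosureMat_mono (orbitRSet_subset_of_isBase_image e he)

end

/-- Injections both ways that carry `P`-sets to `Q`-sets and back make the families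
`{s | P s}` and `{t | Q t}` equinumerous, so the image map between them is onto. -/
lemma exists_equiv_forall_iff_image_of_injective {α β : Type*} [Finite α] [Finite β]
    {P : Set α → Prop} {Q : Set β → Prop} {f : α → β} {g : β → α}
    (hf : Injective f) (hg : Injective g)
    (hPQ : ∀ s, P s → Q (f '' s)) (hQP : ∀ t, Q t → P (g '' t)) :
    ∃ e : α ≃ β, ∀ s, P s ↔ Q (e '' s) := by
  have hbij : Bijective f := hf.bijective_of_nat_card_le (Nat.card_le_card_of_injective g hg)
  let F : {s // P s} → {t // Q t} := fun s => ⟨f '' s, hPQ _ s.2⟩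
  let G : {t // Q t} → {s // P s} := fun t => ⟨g '' t, hQP _ t.2⟩
  have hF : Injective F := fun s s' h => Subtype.ext (Set.image_injective.2 hf congr($h.1))
  have hG : Injective G := fun t t' h => Subtype.ext (Set.image_injective.2 hg congr($h.1))
  have hFsurj := (hF.bijective_of_nat_card_le (Nat.card_le_card_of_injective G hG)).2
  refine ⟨Equiv.ofBijective f hbij, fun s => ⟨hPQ s, fun hs => ?_⟩⟩
  obtain ⟨⟨s', hs'⟩, h⟩ := hFsurj ⟨_, hs⟩
  rwa [← Set.image_injective.2 hf congr($h.1)]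

theorem XSet_eq_XSet_iff_matroid_iso_general
    {k : Type*} [Field k]
    (n : ℕ) (m m' : ℕ)
    (M : Matroid (Fin m)) (M' : Matroid (Fin m'))
    (hMrk : ∀ B : Set (Fin m), M.IsBase B → B.ncard = n - 1)
    (hM'rk : ∀ B : Set (Fin m'), M'.IsBase B → B.ncard = n - 1)
    (hMloopless : ∀ e : Fin m, M.Indep {e})
    (hM'loopless : ∀ e : Fin m', M'.Indep {e})
    (p : Fin m → Fin (n - 1) → k) (hp : Realises n m M p)
    (p' : Fin m' → Fin (n - 1) → k) (hp' : Realises n m' M' p') :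
    XSet k n m M = XSet k n m' M' ↔
      ∃ e : Fin m ≃ Fin m', ∀ B : Set (Fin m), M.IsBase B ↔ M'.IsBase (e '' B) := by
  constructor
  · intro hX
    obtain ⟨ι, hι, hιB⟩ := exists_injective_isBase_image_of_extZero_mem_windowSet
      (Nat.le_add_right m m') hMrk hp (hp.ne_zero hMrk hMloopless)
      (XSet_subset_windowSet (Nat.le_add_left m' m) M' (hX ▸ extZero_mem_XSet hp.mem_RSet))
    obtain ⟨κ, hκ, hκB⟩ := exists_injective_isBase_image_of_extZero_mem_windowSet
      (Nat.le_add_left m' m) hM'rk hp' (hp'.ne_zero hM'rk hM'loopless)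
      (XSet_subset_windowSet (Nat.le_add_right m m') M (hX ▸ extZero_mem_XSet hp'.mem_RSet))
    exact exists_equiv_forall_iff_image_of_injective hι hκ hιB hκB
  · rintro ⟨e, he⟩
    obtain rfl : m = m' := by simpa using Fintype.card_congr e
    refine (XSet_subset_XSet_of_isBase_image e fun B => (he B).1).antisymm
      (XSet_subset_XSet_of_isBase_image e.symm fun B hB => (he _).2 ?_)
    rwa [e.image_symm_image]

/-- For loopless matroids `M, M'` of rank `n - 1` on `Fin m`, `Fin m'` that are
realisable over `k`, the varieties `X_M` and `X_{M'}` coincide if and only if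
`M` and `M'` are isomorphic. -/
theorem XSet_eq_XSet_iff_matroid_iso
    {k : Type*} [Field k] [IsAlgClosed k] [CharZero k]
    (n : ℕ) (hn : 1 ≤ n) (m m' : ℕ)
    (M : Matroid (Fin m)) (M' : Matroid (Fin m'))
    (hME : M.E = Set.univ) (hM'E : M'.E = Set.univ)
    (hMrk : ∀ B : Set (Fin m), M.IsBase B → B.ncard = n - 1)
    (hM'rk : ∀ B : Set (Fin m'), M'.IsBase B → B.ncard = n - 1)
    (hMloopless : ∀ e : Fin m, M.Indep {e})
    (hM'loopless : ∀ e : Fin m', M'.Indep {e})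
    (p : Fin m → Fin (n - 1) → k) (hp : Realises n m M p)
    (p' : Fin m' → Fin (n - 1) → k) (hp' : Realises n m' M' p') :
    XSet k n m M = XSet k n m' M' ↔
      ∃ e : Fin m ≃ Fin m', ∀ B : Set (Fin m), M.IsBase B ↔ M'.IsBase (e '' B) :=
  XSet_eq_XSet_iff_matroid_iso_general n m m' M M' hMrk hM'rk hMloopless hM'loopless p hp p' hp'
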